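/- arXiv:1502.05056 — 2 statements merged into one kernel-verified Lean document; each statement's English description precedes it below -/
import Mathlib

section
/- (Proposition: RS dynamics coincides with the PW(r) multiplicative weights update) Let W be any fitness matrix, P any population distribution, and r ∈ [0,1]. Then the RS update P' = RS_r(P) satisfies, for every i ∈ [n], Σ_j p'_{ij} = (r · x_i(P) · Σ_j w_{ij} y_j(P) + (1−r) · Σ_j w_{ij} p_{ij}) / w̄^R(P). In particular, for every i with x_i(P) > 0, x_i(RS_r(P)) = x_i(P) · (r·G_i(P) + (1−r)·g_i(P)) / w̄^R(P). -/
open Finset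

noncomputable section

/-- `P` is a population distribution: nonnegative entries summing to 1. -/
def IsPopDist {n m : ℕ} (P : Fin n → Fin m → ℝ) : Prop :=
  (∀ i j, 0 ≤ P i j) ∧ (∑ i, ∑ j, P i j) = 1

/-- `W` is a fitness matrix: strictly positive entries. -/
def IsFitness {n m : ℕ} (W : Fin n → Fin m → ℝ) : Prop :=
  ∀ i j, 0 < W i j

/-- Average fitness w̄(P) = Σ_{i,j} p_{ij} w_{ij}. -/
def wbar {n m : ℕ} (W P : Fin n → Fin m → ℝ) : ℝ :=
  ∑ i, ∑ j, P i j * W i j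

/-- First marginal x_i(P) = Σ_j p_{ij}. -/
def xmarg {n m : ℕ} (P : Fin n → Fin m → ℝ) (i : Fin n) : ℝ :=
  ∑ j, P i j

/-- Second marginal y_j(P) = Σ_i p_{ij}. -/
def ymarg {n m : ℕ} (P : Fin n → Fin m → ℝ) (j : Fin m) : ℝ :=
  ∑ i, P i j

/-- Selection update p^S_{ij} = p_{ij} w_{ij} / w̄(P). -/
def pS {n m : ℕ} (W P : Fin n → Fin m → ℝ) (i : Fin n) (j : Fin m) : ℝ :=
  P i j * W i j / wbar W P

/-- Recombination-after-selection matrix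
  p^{SR}_{ij} = (Σ_l p_{il} w_{il})(Σ_k p_{kj} w_{kj}) / w̄(P)². -/
def pSR {n m : ℕ} (W P : Fin n → Fin m → ℝ) (i : Fin n) (j : Fin m) : ℝ :=
  (∑ l, P i l * W i l) * (∑ k, P k j * W k j) / (wbar W P) ^ 2

/-- SR update: r·p^{SR}_{ij} + (1−r)·p^S_{ij}. -/
def SRupd {n m : ℕ} (W P : Fin n → Fin m → ℝ) (r : ℝ) (i : Fin n) (j : Fin m) : ℝ :=
  r * pSR W P i j + (1 - r) * pS W P i j

/-- Conditional expected fitness g_i(P) = Σ_j (p_{ij}/x_i(P)) w_{ij}. -/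
def gcond {n m : ℕ} (W P : Fin n → Fin m → ℝ) (i : Fin n) : ℝ :=
  ∑ j, (P i j / xmarg P i) * W i j

/-- Marginal expected fitness G_i(P) = Σ_j y_j(P) w_{ij}. -/
def Gmarg {n m : ℕ} (W P : Fin n → Fin m → ℝ) (i : Fin n) : ℝ :=
  ∑ j, ymarg P j * W i j

/-- Normalizer w̄^R(P) = Σ_{i,j} w_{ij}(r·x_i y_j + (1−r)·p_{ij}). -/
def wbarR {n m : ℕ} (W P : Fin n → Fin m → ℝ) (r : ℝ) : ℝ :=
  ∑ i, ∑ j, W i j * (r * xmarg P i * ymarg P j + (1 - r) * P i j)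

/-- RS update: w_{ij}(r·x_i y_j + (1−r)·p_{ij}) / w̄^R(P). -/
def RSupd {n m : ℕ} (W P : Fin n → Fin m → ℝ) (r : ℝ) (i : Fin n) (j : Fin m) : ℝ :=
  W i j * (r * xmarg P i * ymarg P j + (1 - r) * P i j) / wbarR W P r

section

variable {n m : ℕ} (W P : Fin n → Fin m → ℝ)

theorem sum_RSupd (r : ℝ) (i : Fin n) :
    ∑ j, RSupd W P r i j =
      (r * xmarg P i * (∑ j, W i j * ymarg P j) + (1 - r) * ∑ j, W i j * P i j)
        / wbarR W P r := by
  simp only [RSupd, ← sum_div, mul_sum, ← sum_add_distrib]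
  congr 1
  exact sum_congr rfl fun j _ => by ring

theorem Gmarg_eq_sum_mul_ymarg (i : Fin n) :
    Gmarg W P i = ∑ j, W i j * ymarg P j := by
  simp only [Gmarg, mul_comm]

theorem xmarg_mul_gcond {i : Fin n} (hx : xmarg P i ≠ 0) :
    xmarg P i * gcond W P i = ∑ j, W i j * P i j := by
  rw [gcond, mul_sum]
  exact sum_congr rfl fun j _ => by field_simp

end

theorem rs_dynamics_is_pw_r_general (n m : ℕ)
    (W P : Fin n → Fin m → ℝ)
    (r : ℝ) :
    (∀ i, ∑ j, RSupd W P r i j =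
      (r * xmarg P i * (∑ j, W i j * ymarg P j) + (1 - r) * ∑ j, W i j * P i j)
        / wbarR W P r) ∧
    (∀ i, 0 < xmarg P i →
      ∑ j, RSupd W P r i j =
        xmarg P i * (r * Gmarg W P i + (1 - r) * gcond W P i) / wbarR W P r) := by
  refine ⟨sum_RSupd W P r, fun i hx => ?_⟩
  rw [sum_RSupd, ← xmarg_mul_gcond W P hx.ne', ← Gmarg_eq_sum_mul_ymarg]
  ring

/-- Proposition: RS dynamics coincides with the PW(r) multiplicative weights update. -/
theorem rs_dynamics_is_pw_r (n m : ℕ) (hn : 1 ≤ n) (hm : 1 ≤ m)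
    (W P : Fin n → Fin m → ℝ) (hW : IsFitness W) (hP : IsPopDist P)
    (r : ℝ) (hr : r ∈ Set.Icc (0 : ℝ) 1) :
    (∀ i, ∑ j, RSupd W P r i j =
      (r * xmarg P i * (∑ j, W i j * ymarg P j) + (1 - r) * ∑ j, W i j * P i j)
        / wbarR W P r) ∧
    (∀ i, 0 < xmarg P i →
      ∑ j, RSupd W P r i j =
        xmarg P i * (r * Gmarg W P i + (1 - r) * gcond W P i) / wbarR W P r) :=
  rs_dynamics_is_pw_r_general n m W P r
end
end

section
/- (The SR dynamics leaves the Wright manifold, even under weak selection) For every s ∈ (0,1) and every r ∈ (0,1), there exist n = m = 2, a fitness matrix W with w_{ij} ∈ [1−s, 1+s] for all i,j, and a product population distribution P (i.e. p_{ij} = x_i(P)·y_j(P) for all i,j), such that the SR update SR_r(P) is NOT a product distribution, i.e. there exist i,j with (SR_r(P))_{ij} ≠ (Σ_{j'} (SR_r(P))_{ij'})·(Σ_{i'} (SR_r(P))_{i'j}). -/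
open Finset

noncomputable section

/-!
Recombination after selection replaces a fraction `r` of the selected population `p^S` by the
product of its marginals, which leaves those marginals unchanged; hence the linkage
disequilibrium `p_{ij} - x_i y_j` of `SR_r(P)` is `1 - r` times that of `p^S`.
For the uniform product population and the fitness `[[1+s, 1], [1, 1]]` the selected population
is `W / (4 + s)`, and a 2 × 2 distribution's disequilibrium at `(0, 0)` is its determinant,
here `s / (4 + s)²`.
-/

section Marginals

variable {n m : ℕ}

def recombine (r : ℝ) (Q : Fin n → Fin m → ℝ) (i : Fin n) (j : Fin m) : ℝ :=
  r * (xmarg Q i * ymarg Q j) + (1 - r) * Q i j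

variable {Q : Fin n → Fin m → ℝ}

theorem xmarg_recombine (hQ : ∑ i, ∑ j, Q i j = 1) (r : ℝ) (i : Fin n) :
    xmarg (recombine r Q) i = xmarg Q i := by
  have hy : ∑ j, ymarg Q j = 1 := Finset.sum_comm.trans hQ
  simp only [xmarg, recombine, Finset.sum_add_distrib, ← Finset.mul_sum] at hy ⊢
  rw [hy]
  ring

theorem ymarg_recombine (hQ : ∑ i, ∑ j, Q i j = 1) (r : ℝ) (j : Fin m) :
    ymarg (recombine r Q) j = ymarg Q j := by
  have hx : ∑ i, xmarg Q i = 1 := hQ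
  simp only [ymarg, recombine, Finset.sum_add_distrib, ← Finset.mul_sum, ← Finset.sum_mul]
    at hx ⊢
  rw [hx]
  ring

theorem recombine_sub_xmarg_mul_ymarg (hQ : ∑ i, ∑ j, Q i j = 1) (r : ℝ) (i : Fin n)
    (j : Fin m) :
    recombine r Q i j - xmarg (recombine r Q) i * ymarg (recombine r Q) j =
      (1 - r) * (Q i j - xmarg Q i * ymarg Q j) := by
  rw [xmarg_recombine hQ, ymarg_recombine hQ, recombine]
  ring

end Marginals

section Selection

variable {n m : ℕ} (W P : Fin n → Fin m → ℝ)

theorem sum_pS (h : wbar W P ≠ 0) : ∑ i, ∑ j, pS W P i j = 1 := by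
  simp only [pS, ← Finset.sum_div]
  exact div_self h

theorem pSR_eq_xmarg_mul_ymarg (i : Fin n) (j : Fin m) :
    pSR W P i j = xmarg (pS W P) i * ymarg (pS W P) j := by
  simp only [pSR, xmarg, ymarg, pS, ← Finset.sum_div]
  ring

theorem SRupd_eq_recombine (r : ℝ) : SRupd W P r = recombine r (pS W P) := by
  ext i j
  rw [SRupd, pSR_eq_xmarg_mul_ymarg, recombine]

end Selection

theorem sub_xmarg_mul_ymarg_eq_det {Q : Fin 2 → Fin 2 → ℝ} (hQ : ∑ i, ∑ j, Q i j = 1) :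
    Q 0 0 - xmarg Q 0 * ymarg Q 0 = (Matrix.of Q).det := by
  simp only [Fin.sum_univ_two] at hQ
  simp only [Matrix.det_fin_two, Matrix.of_apply, xmarg, ymarg, Fin.sum_univ_two]
  linear_combination -(Q 0 0) * hQ

section Witness

def epistaticFitness (s : ℝ) : Fin 2 → Fin 2 → ℝ :=
  ![![1 + s, 1], ![1, 1]]

def uniformDist : Fin 2 → Fin 2 → ℝ := fun _ _ => 1 / 4

variable {s : ℝ}

theorem isFitness_epistaticFitness (hs : 0 ≤ s) : IsFitness (epistaticFitness s) := by
  intro i j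
  fin_cases i <;> fin_cases j <;> simp [epistaticFitness]
  linarith

theorem epistaticFitness_mem_Icc (hs : 0 ≤ s) (i j : Fin 2) :
    epistaticFitness s i j ∈ Set.Icc (1 - s) (1 + s) := by
  rw [Set.mem_Icc]
  fin_cases i <;> fin_cases j <;> simp [epistaticFitness] <;> linarith

theorem isPopDist_uniformDist : IsPopDist uniformDist := by
  refine ⟨fun _ _ => by norm_num [uniformDist], ?_⟩
  norm_num [uniformDist]

theorem uniformDist_eq_xmarg_mul_ymarg (i j : Fin 2) :
    uniformDist i j = xmarg uniformDist i * ymarg uniformDist j := by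
  norm_num [uniformDist, xmarg, ymarg]

theorem wbar_epistaticFitness_uniformDist :
    wbar (epistaticFitness s) uniformDist = (4 + s) / 4 := by
  simp only [wbar, epistaticFitness, uniformDist, Fin.sum_univ_two, Matrix.cons_val_zero,
    Matrix.cons_val_one]
  ring

theorem det_pS_epistaticFitness_uniformDist (hs : 4 + s ≠ 0) :
    (Matrix.of (pS (epistaticFitness s) uniformDist)).det = s / (4 + s) ^ 2 := by
  simp only [Matrix.det_fin_two, Matrix.of_apply, pS, wbar_epistaticFitness_uniformDist]
  simp only [epistaticFitness, uniformDist, Matrix.cons_val_zero, Matrix.cons_val_one]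
  field_simp
  ring

end Witness

/-- The SR dynamics leaves the Wright manifold, even under weak selection. -/
theorem sr_leaves_wright_manifold :
    ∀ s ∈ Set.Ioo (0 : ℝ) 1, ∀ r ∈ Set.Ioo (0 : ℝ) 1,
      ∃ W P : Fin 2 → Fin 2 → ℝ,
        IsFitness W ∧ (∀ i j, W i j ∈ Set.Icc (1 - s) (1 + s)) ∧
        IsPopDist P ∧ (∀ i j, P i j = xmarg P i * ymarg P j) ∧
        ∃ i j, SRupd W P r i j ≠
          (∑ j', SRupd W P r i j') * (∑ i', SRupd W P r i' j) := by
  rintro s ⟨hs, -⟩ r ⟨-, hr⟩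
  refine ⟨epistaticFitness s, uniformDist, isFitness_epistaticFitness hs.le,
    epistaticFitness_mem_Icc hs.le, isPopDist_uniformDist, uniformDist_eq_xmarg_mul_ymarg,
    0, 0, sub_ne_zero.mp ?_⟩
  have h4s : 4 + s ≠ 0 := by positivity
  have hwbar : wbar (epistaticFitness s) uniformDist ≠ 0 := by
    rw [wbar_epistaticFitness_uniformDist]
    positivity
  change _ - xmarg _ 0 * ymarg _ 0 ≠ 0
  rw [SRupd_eq_recombine, recombine_sub_xmarg_mul_ymarg (sum_pS _ _ hwbar),
    sub_xmarg_mul_ymarg_eq_det (sum_pS _ _ hwbar), det_pS_epistaticFitness_uniformDist h4s]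
  exact mul_ne_zero (sub_ne_zero.mpr hr.ne') (by positivity)
end
end
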